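/- arXiv:2508.16023 — 4 statements merged into one kernel-verified Lean document; each statement's English description precedes it below -/
import Mathlib

section
/- Let L be a sorted list of tagged elements (pairs of key and thread id) and suppose for thread p every p-tagged key in L is less than or equal to every key in a multiset H_p. Then after moving the minimum of H_p into L (inserted in sorted position) and removing it from H_p, the invariant still holds: every p-tagged key in the new L is less than or equal to every key in the new H_p. -/
theorem List.mem_takeWhile_append_cons_dropWhile {α : Type*} (q : α → Bool) (l : List α)
    (a x : α) : x ∈ l.takeWhile q ++ a :: l.dropWhile q ↔ x = a ∨ x ∈ l := by
  rw [List.perm_middle.mem_iff, List.mem_cons, List.takeWhile_append_dropWhile]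

theorem stmt4_general (L : List (ℤ × ℕ)) (p : ℕ) (H : Multiset ℤ) (m : ℤ)
    (hmin : ∀ h ∈ H, m ≤ h)
    (hinv : ∀ e ∈ L, e.2 = p → ∀ h ∈ H, e.1 ≤ h)
    (L' : List (ℤ × ℕ))
    (hL' : L' = L.takeWhile (fun e => decide (e.1 < m)) ++
      (m, p) :: L.dropWhile (fun e => decide (e.1 < m))) :
    ∀ e ∈ L', e.2 = p → ∀ h ∈ H.erase m, e.1 ≤ h := by
  subst hL'
  intro e he hep h hh
  have hH : h ∈ H := Multiset.mem_of_mem_erase hh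
  rcases (List.mem_takeWhile_append_cons_dropWhile _ _ _ _).1 he with rfl | heL
  · exact hmin h hH
  · exact hinv e heL hep h hH

/-- PIPQ upsert preserves the two-level invariant: if every `p`-tagged key of the sorted
leader list `L` is ≤ every key of the worker heap `H`, then after inserting the minimum
`m` of `H` into `L` in sorted position (tagged with `p`) and erasing `m` from `H`,
every `p`-tagged key of the new list is ≤ every key of the new heap. -/
theorem stmt4 (L : List (ℤ × ℕ)) (p : ℕ) (H : Multiset ℤ) (m : ℤ)
    (hsorted : (L.map Prod.fst).Pairwise (· ≤ ·))
    (hm : m ∈ H) (hmin : ∀ h ∈ H, m ≤ h)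
    (hinv : ∀ e ∈ L, e.2 = p → ∀ h ∈ H, e.1 ≤ h)
    (L' : List (ℤ × ℕ))
    (hL' : L' = L.takeWhile (fun e => decide (e.1 < m)) ++
      (m, p) :: L.dropWhile (fun e => decide (e.1 < m))) :
    ∀ e ∈ L', e.2 = p → ∀ h ∈ H.erase m, e.1 ≤ h :=
  stmt4_general L p H m hmin hinv L' hL'
end

section
/- Let L be a multiset of tagged keys and H_p a multiset of keys satisfying the invariant that every p-tagged key in L is ≤ every key in H_p. If a new key k satisfies k < min(H_p) (or H_p is empty), then inserting (k, p) into L preserves the invariant; and if k ≥ min(H_p) or H_p is empty is false and k ≥ some p-tagged key m that is the maximum p-tagged key of L, then inserting k into H_p preserves the invariant. -/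
def TagBounded {α β : Type*} [LE α] (L : Multiset (α × β)) (p : β) (H : Multiset α) : Prop :=
  ∀ e ∈ L, e.2 = p → ∀ h ∈ H, e.1 ≤ h

namespace TagBounded

variable {α β : Type*} [LE α] {L : Multiset (α × β)} {p : β} {H : Multiset α} {k : α}

theorem cons_tagged (hinv : TagBounded L p H) (hk : ∀ h ∈ H, k ≤ h) :
    TagBounded ((k, p) ::ₘ L) p H := by
  intro e he hep h hh
  rcases Multiset.mem_cons.1 he with rfl | he
  · exact hk h hh
  · exact hinv e he hep h hh

theorem cons_key (hinv : TagBounded L p H) (hk : ∀ e ∈ L, e.2 = p → e.1 ≤ k) :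
    TagBounded L p (k ::ₘ H) := by
  intro e he hep h hh
  rcases Multiset.mem_cons.1 hh with rfl | hh
  · exact hk e he hep
  · exact hinv e he hep h hh

end TagBounded

/-- Correctness of the PIPQ insertion decision.  `L` is a multiset of tagged keys and
`H` the worker heap of thread `p`, with the invariant that every `p`-tagged key of `L`
is ≤ every key of `H`.
(1) If `k` is smaller than every key of `H` (in particular if `H` is empty),
inserting `(k, p)` into `L` preserves the invariant.
(2) If instead `k ≥ min H` and `k` is at least the maximum `p`-tagged key `m` of `L`,
then inserting `k` into `H` preserves the invariant. -/
theorem stmt5 (L : Multiset (ℤ × ℕ)) (p : ℕ) (H : Multiset ℤ)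
    (hinv : ∀ e ∈ L, e.2 = p → ∀ h ∈ H, e.1 ≤ h) (k : ℤ) :
    ((H = 0 ∨ ∀ h ∈ H, k < h) →
      ∀ e ∈ (k, p) ::ₘ L, e.2 = p → ∀ h ∈ H, e.1 ≤ h) ∧
    (∀ hmin : ℤ, hmin ∈ H → (∀ h ∈ H, hmin ≤ h) → hmin ≤ k →
      ∀ m : ℤ, (m, p) ∈ L → (∀ e ∈ L, e.2 = p → e.1 ≤ m) → m ≤ k →
      ∀ e ∈ L, e.2 = p → ∀ h ∈ k ::ₘ H, e.1 ≤ h) := by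
  have hinv : TagBounded L p H := hinv
  refine ⟨fun hk => hinv.cons_tagged ?_, fun _ _ _ _ m _ hmax hmk => hinv.cons_key ?_⟩
  · rcases hk with rfl | hk
    · simp
    · exact fun h hh => (hk h hh).le
  · exact fun e he hep => (hmax e he hep).trans hmk
end

section
/- Suppose for every thread p the multiset H_p and the multiset L of tagged keys satisfy the PIPQ invariant (every p-tagged key in L is ≤ every key in H_p), and every nonempty H_p has at least one p-tagged element in L. Then the minimum key in L equals the minimum key over the union of L and all the H_p; i.e., delete-min on L returns the global minimum. -/
theorem stmt7_general (n : ℕ) (L : Multiset (ℤ × Fin n)) (H : Fin n → Multiset ℤ)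
    (hinv : ∀ p : Fin n, ∀ e ∈ L, e.2 = p → ∀ h ∈ H p, e.1 ≤ h)
    (hrep : ∀ p : Fin n, H p ≠ 0 → ∃ e ∈ L, e.2 = p)
    (k : ℤ) (hmin : ∀ e ∈ L, k ≤ e.1) :
    (∀ e ∈ L, k ≤ e.1) ∧ ∀ p : Fin n, ∀ h ∈ H p, k ≤ h := by
  refine ⟨hmin, fun p h hh => ?_⟩
  obtain ⟨e, heL, hep⟩ := hrep p (ne_of_mem_of_not_mem' hh (Multiset.notMem_zero h))
  exact (hmin e heL).trans (hinv p e heL hep h hh)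

/-- Delete-min on the leader level returns the global minimum.  If for every thread `p`
every `p`-tagged key of `L` is ≤ every key of `H p`, every nonempty `H p` has a
`p`-tagged representative in `L`, and `(k, t) ∈ L` is a minimum-key element of `L`,
then `k` is ≤ every key of `L` and of every worker heap, i.e. it is the minimum of the
union. -/
theorem stmt7 (n : ℕ) (L : Multiset (ℤ × Fin n)) (H : Fin n → Multiset ℤ)
    (hinv : ∀ p : Fin n, ∀ e ∈ L, e.2 = p → ∀ h ∈ H p, e.1 ≤ h)
    (hrep : ∀ p : Fin n, H p ≠ 0 → ∃ e ∈ L, e.2 = p)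
    (k : ℤ) (t : Fin n) (hk : (k, t) ∈ L) (hmin : ∀ e ∈ L, k ≤ e.1) :
    (∀ e ∈ L, k ≤ e.1) ∧ ∀ p : Fin n, ∀ h ∈ H p, k ≤ h :=
  stmt7_general n L H hinv hrep k hmin
end

section
/- If each thread's counter L_count_p equals the number of p-tagged elements in L, and L_count_p ≥ 2 for every thread p with nonempty H_p, then for any thread q, removing the minimum element of L (which is tagged with some thread t) leaves at least one t-tagged element in L whenever H_t is nonempty; in particular the maximum t-tagged element of L (if t has ≥ 2 elements) is distinct from the minimum element of L removed. -/
theorem Finset.exists_mem_erase_of_one_lt_card_filter {α : Type*} [DecidableEq α]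
    {s : Finset α} {p : α → Prop} [DecidablePred p] (h : 1 < (s.filter p).card) (a : α) :
    ∃ x ∈ s.erase a, p x := by
  obtain ⟨x, hx, hxa⟩ := (Finset.one_lt_card_iff_nontrivial.1 h).exists_ne a
  rw [Finset.mem_filter] at hx
  exact ⟨x, Finset.mem_erase.2 ⟨hxa, hx.1⟩, hx.2⟩

theorem stmt8_general (n : ℕ) (L : Finset (ℤ × Fin n)) (H : Fin n → Multiset ℤ)
    (hcnt : ∀ p : Fin n, H p ≠ 0 → 2 ≤ (L.filter (fun e => e.2 = p)).card)
    (e : ℤ × Fin n) (hmin : ∀ e' ∈ L, e.1 ≤ e'.1)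
    (hHt : H e.2 ≠ 0) :
    (∃ e' ∈ L.erase e, e'.2 = e.2) ∧
    ∀ m ∈ L, m.2 = e.2 → (∀ e' ∈ L, e'.2 = e.2 → e'.1 ≤ m.1) →
      2 ≤ (L.filter (fun e' => e'.2 = e.2)).card → m ≠ e := by
  refine ⟨Finset.exists_mem_erase_of_one_lt_card_filter (hcnt e.2 hHt) e, ?_⟩
  intro m _ _ hmax htwo hme
  obtain ⟨x, hx, hxtid⟩ := Finset.exists_mem_erase_of_one_lt_card_filter htwo e
  obtain ⟨hxe, hxL⟩ := Finset.mem_erase.1 hx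
  have hkey : x.1 = e.1 := le_antisymm (hme ▸ hmax x hxL hxtid) (hmin x hxL)
  exact hxe (Prod.ext hkey hxtid)

/-- Non-interference of L-DeleteMin and L-DeleteMaxP.  `L` is a set of distinct nodes
`(key, tid)`.  If every thread `p` with nonempty heap `H p` has at least two `p`-tagged
nodes in `L`, and `e` is a minimum-key node of `L` (tagged with thread `e.2`), then
removing `e` leaves at least one `e.2`-tagged node in `L` whenever `H e.2` is nonempty;
in particular any maximum `e.2`-tagged node `m` (when thread `e.2` has ≥ 2 nodes) is
distinct from the removed minimum `e`. -/
theorem stmt8 (n : ℕ) (L : Finset (ℤ × Fin n)) (H : Fin n → Multiset ℤ)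
    (hcnt : ∀ p : Fin n, H p ≠ 0 → 2 ≤ (L.filter (fun e => e.2 = p)).card)
    (e : ℤ × Fin n) (he : e ∈ L) (hmin : ∀ e' ∈ L, e.1 ≤ e'.1)
    (hHt : H e.2 ≠ 0) :
    (∃ e' ∈ L.erase e, e'.2 = e.2) ∧
    ∀ m ∈ L, m.2 = e.2 → (∀ e' ∈ L, e'.2 = e.2 → e'.1 ≤ m.1) →
      2 ≤ (L.filter (fun e' => e'.2 = e.2)).card → m ≠ e :=
  stmt8_general n L H hcnt e hmin hHt
end
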